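/- Let W = ⊕_{a,b≥0, a+b≤N} ℚ(q) v_{a,b} and define e v_{a,b} = q^{-M+2b}[a] v_{a-1,b} + [b] v_{a,b-1} for a non-negative integer M, with v_{a,b} = 0 outside the index range. Then for 0 ≤ i ≤ N, the vector u_i = ∑_{j=0}^{i} (-1)^j ∏_{k=1}^{j} ( q^{M-2i+2k} · [i+1-k]/[k] ) v_{j,i-j} satisfies e u_i = 0. (Here the exponent convention matches q^{|m|+2(-i)+2k} with |m| = M.) -/
import Mathlib


noncomputable section

/-- The indeterminate `q` in the field `ℚ(q)`. -/
def q : RatFunc ℚ := RatFunc.X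

/-- The quantum integer `[k]` in `ℚ(q)`. -/
def qint (k : ℤ) : RatFunc ℚ := (q ^ k - q ^ (-k)) / (q - q⁻¹)

/-- The `ℚ(q)`-vector space spanned by `{v_{a,b}}`; the relevant vectors live in the region
`a + b ≤ N`, and the operator below never leaves this region since it decreases `a + b`. -/
abbrev W := (ℕ × ℕ) →₀ RatFunc ℚ

/-- `e v_{a,b} = q^{-M+2b}[a] v_{a-1,b} + [b] v_{a,b-1}`; the convention
`v_{-1,b} = v_{a,-1} = 0` is automatic since `[0] = 0`. -/
def eOp (M : ℕ) : W →ₗ[RatFunc ℚ] W :=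
  Finsupp.lift W (RatFunc ℚ) (ℕ × ℕ) fun p =>
    (q ^ (-(M : ℤ) + 2 * p.2) * qint p.1) • Finsupp.single (p.1 - 1, p.2) (1 : RatFunc ℚ) +
      qint p.2 • Finsupp.single (p.1, p.2 - 1) (1 : RatFunc ℚ)

/-- `u_i = ∑_{j=0}^{i} (-1)^j ∏_{k=1}^{j} (q^{M-2i+2k}·[i+1-k]/[k]) v_{j,i-j}`
(empty products equal `1`). -/
def uVec (M i : ℕ) : W :=
  ∑ j ∈ Finset.range (i + 1),
    ((-1 : RatFunc ℚ) ^ j *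
        ∏ k ∈ Finset.Icc 1 j,
          (q ^ ((M : ℤ) - 2 * i + 2 * k) * qint ((i : ℤ) + 1 - k) / qint k)) •
      Finsupp.single (j, i - j) (1 : RatFunc ℚ)


lemma q_ne_zero : q ≠ 0 := RatFunc.X_ne_zero

lemma q_pow_ne_one (n : ℕ) (hn : n ≠ 0) : q ^ n ≠ 1 := by
  intro h
  have h2 : (Polynomial.X : Polynomial ℚ) ^ n = 1 := by
    apply RatFunc.algebraMap_injective ℚ
    rw [map_pow, map_one, RatFunc.algebraMap_X]
    exact h
  have := congrArg Polynomial.natDegree h2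
  simp [Polynomial.natDegree_X_pow] at this
  exact hn this

lemma qden_ne_zero : q - q⁻¹ ≠ 0 := by
  rw [sub_ne_zero]
  intro h
  have h2 : q * q = q⁻¹ * q := by rw [← h]
  rw [inv_mul_cancel₀ q_ne_zero] at h2
  exact q_pow_ne_one 2 (by norm_num) (by rw [sq]; exact h2)

lemma qint_ne_zero (k : ℕ) (hk : k ≠ 0) : qint k ≠ 0 := by
  unfold qint
  apply div_ne_zero _ qden_ne_zero
  rw [sub_ne_zero]
  intro h
  have hq := q_ne_zero
  have : q ^ (2 * k) = 1 := by
    have h3 : q ^ (k : ℤ) * q ^ (k : ℤ) = q ^ (-(k:ℤ)) * q ^ (k : ℤ) := by rw [h]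
    rw [← zpow_add₀ hq, ← zpow_add₀ hq] at h3
    simpa [two_mul, ← zpow_natCast, zpow_add₀ hq] using h3
  exact q_pow_ne_one (2 * k) (by omega) this

lemma qint_zero : qint 0 = 0 := by simp [qint]

lemma eOp_single (M : ℕ) (p : ℕ × ℕ) : eOp M (Finsupp.single p 1) =
    (q ^ (-(M : ℤ) + 2 * p.2) * qint p.1) • Finsupp.single (p.1 - 1, p.2) (1 : RatFunc ℚ) +
      qint p.2 • Finsupp.single (p.1, p.2 - 1) (1 : RatFunc ℚ) := by
  rw [eOp, Finsupp.lift_apply, Finsupp.sum_single_index, one_smul]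
  simp

lemma alg (C a b x y : RatFunc ℚ) (hb : b ≠ 0) (hxy : x * y = 1) :
    C * (-(x * a / b)) * (y * b) + C * a = 0 := by
  have h1 : C * (-(x * a / b)) * (y * b) = -(C * a * (x * y)) * (b / b) := by ring
  rw [div_self hb, hxy] at h1
  rw [h1]; ring

/-- For `0 ≤ i ≤ N`, `e u_i = 0`. -/
theorem eOp_uVec_eq_zero (N M i : ℕ) (hi : i ≤ N) : eOp M (uVec M i) = 0 := by
  classical
  set c : ℕ → RatFunc ℚ := fun j => (-1 : RatFunc ℚ) ^ j *
      ∏ k ∈ Finset.Icc 1 j,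
        (q ^ ((M : ℤ) - 2 * i + 2 * k) * qint ((i : ℤ) + 1 - k) / qint k) with hc
  have key : ∀ t : ℕ, t < i →
      c (t + 1) * (q ^ (-(M : ℤ) + 2 * ((i - (t+1) : ℕ) : ℤ)) * qint ((t+1 : ℕ) : ℤ))
        + c t * qint ((i - t : ℕ) : ℤ) = 0 := by
    intro t ht
    have hstep : c (t + 1) = c t *
        (-(q ^ ((M : ℤ) - 2 * i + 2 * ((t+1 : ℕ) : ℤ)) * qint ((i : ℤ) + 1 - ((t+1 : ℕ) : ℤ))
            / qint ((t+1 : ℕ) : ℤ))) := by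
      rw [hc]
      simp only []
      rw [Finset.prod_Icc_succ_top (by omega : 1 ≤ t + 1), pow_succ]
      ring
    rw [hstep]
    have hcast1 : ((i - (t+1) : ℕ) : ℤ) = (i : ℤ) - t - 1 := by omega
    have hcast2 : ((i - t : ℕ) : ℤ) = (i : ℤ) - t := by omega
    have hcast3 : (i : ℤ) + 1 - ((t+1 : ℕ) : ℤ) = (i : ℤ) - t := by push_cast; ring
    rw [hcast1, hcast2, hcast3]
    exact alg (c t) (qint ((i : ℤ) - t)) (qint ((t+1 : ℕ) : ℤ))
      (q ^ ((M : ℤ) - 2 * i + 2 * ((t+1 : ℕ) : ℤ)))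
      (q ^ (-(M : ℤ) + 2 * ((i : ℤ) - t - 1)))
      (qint_ne_zero (t+1) (by omega))
      (by rw [← zpow_add₀ q_ne_zero]
          have : (M : ℤ) - 2 * i + 2 * ((t+1 : ℕ) : ℤ) + (-(M : ℤ) + 2 * ((i : ℤ) - t - 1)) = 0 := by
            push_cast; ring
          rw [this, zpow_zero])
  have expand : eOp M (uVec M i) =
      (∑ j ∈ Finset.range (i + 1),
        (c j * (q ^ (-(M : ℤ) + 2 * ((i - j : ℕ) : ℤ)) * qint (j : ℤ))) •
          Finsupp.single (j - 1, i - j) (1 : RatFunc ℚ))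
      + ∑ j ∈ Finset.range (i + 1),
        (c j * qint ((i - j : ℕ) : ℤ)) • Finsupp.single (j, i - j - 1) (1 : RatFunc ℚ) := by
    rw [uVec, map_sum, ← Finset.sum_add_distrib]
    refine Finset.sum_congr rfl fun j hj => ?_
    rw [map_smul, eOp_single]
    rw [smul_add, smul_smul, smul_smul]
  rw [expand, Finset.sum_range_succ', Finset.sum_range_succ]
  have h0 : (c 0 * (q ^ (-(M : ℤ) + 2 * ((i - 0 : ℕ) : ℤ)) * qint ((0:ℕ) : ℤ))) •
      Finsupp.single ((0:ℕ) - 1, i - 0) (1 : RatFunc ℚ) = 0 := by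
    norm_num [qint_zero]
  have hlast : (c i * qint ((i - i : ℕ) : ℤ)) •
      Finsupp.single (i, i - i - 1) (1 : RatFunc ℚ) = 0 := by
    simp [Nat.sub_self, qint_zero]
  rw [h0, hlast, add_zero, add_zero, ← Finset.sum_add_distrib]
  apply Finset.sum_eq_zero
  intro t ht
  rw [Finset.mem_range] at ht
  have hidx1 : t + 1 - 1 = t := by omega
  have hidx2 : i - t - 1 = i - (t + 1) := by omega
  rw [hidx1, hidx2, ← add_smul, key t ht, zero_smul]


end
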